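/- For real matrix systems R₁,…,R_m on ℂ^{n₁},…,ℂ^{n_m}, the density matrices of the direct sum satisfy D(R₁ ⊕ … ⊕ R_m) = conv(D(R₁) ∪ … ∪ D(R_m)) (direct convex sum under block-diagonal embeddings), and the positive cones and dual cones are the direct sums of those of the summands. -/

import Mathlib

open Matrix ComplexOrder

/-- The positive cone `C(R)` of a real matrix system `R`. -/
def cone {ι : Type*} [Fintype ι] (R : Set (Matrix ι ι ℂ)) : Set (Matrix ι ι ℂ) :=
  {A | A ∈ R ∧ A.PosSemidef}

/-- The dual cone `C(R)^∨` inside the hermitian part of `R`, w.r.t. `Re tr(A*B)`. -/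
def dualCone {ι : Type*} [Fintype ι] (R : Set (Matrix ι ι ℂ)) : Set (Matrix ι ι ℂ) :=
  {A | A ∈ R ∧ Aᴴ = A ∧ ∀ B ∈ R, B.PosSemidef → 0 ≤ ((A * B).trace).re}

/-- The density matrices `D(R)` of a real matrix system `R`. -/
def dmat {ι : Type*} [Fintype ι] (R : Set (Matrix ι ι ℂ)) : Set (Matrix ι ι ℂ) :=
  {ρ | ρ ∈ dualCone R ∧ ρ.trace = 1}

/-!
Positive semidefiniteness, hermiticity and the pairing `Re tr(AB)` all split over the diagonal
blocks, which gives the decomposition of both cones. A density matrix of the direct sum is then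
block-diagonal with blocks `Aᵢ` in the dual cones, and pairing with `1 ∈ Rᵢ` shows that the
weights `tᵢ = tr Aᵢ` are nonnegative; they sum to one, so the matrix is the convex combination of
the embedded density matrices `tᵢ⁻¹ Aᵢ`. A block with `tᵢ = 0` vanishes: pairing it with the
positive element `‖Aᵢ‖ • 1 - Aᵢ` of `Rᵢ` (operator norm) gives `tr (Aᵢ²) ≤ 0`.
-/

section DualCone

variable {ι : Type*} [Fintype ι]

lemma Matrix.IsHermitian.ofReal_re_trace {A : Matrix ι ι ℂ} (hA : A.IsHermitian) :
    (A.trace.re : ℂ) = A.trace :=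
  Complex.conj_eq_iff_re.mp <| by
    rw [← Complex.star_def, ← trace_conjTranspose, hA.eq]

lemma zero_mem_dualCone {R : Set (Matrix ι ι ℂ)} (h0 : 0 ∈ R) : 0 ∈ dualCone R :=
  ⟨h0, conjTranspose_zero, fun _ _ _ => by simp⟩

lemma convex_dualCone {R : Set (Matrix ι ι ℂ)} (hR : Convex ℝ R) : Convex ℝ (dualCone R) := by
  rintro A ⟨hAR, hAh, hA⟩ B ⟨hBR, hBh, hB⟩ a b ha hb hab
  refine ⟨hR hAR hBR ha hb hab, by simp [hAh, hBh], fun C hC hCpsd => ?_⟩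
  simp only [add_mul, smul_mul_assoc, trace_add, trace_smul, Complex.add_re, Complex.smul_re,
    smul_eq_mul]
  exact add_nonneg (mul_nonneg ha (hA C hC hCpsd)) (mul_nonneg hb (hB C hC hCpsd))

lemma convex_dmat {R : Set (Matrix ι ι ℂ)} (hR : Convex ℝ R) : Convex ℝ (dmat R) :=
  (convex_dualCone hR).inter ((convex_singleton 1).linear_preimage (traceLinearMap ι ℝ ℂ))

lemma smul_mem_dualCone (R : Submodule ℝ (Matrix ι ι ℂ)) {A : Matrix ι ι ℂ}
    (hA : A ∈ dualCone (R : Set (Matrix ι ι ℂ))) {r : ℝ} (hr : 0 ≤ r) :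
    r • A ∈ dualCone (R : Set (Matrix ι ι ℂ)) := by
  obtain ⟨hAR, hAh, hdual⟩ := hA
  refine ⟨R.smul_mem r hAR, by simp [hAh], fun B hB hBpsd => ?_⟩
  simpa [smul_mul_assoc, trace_smul] using mul_nonneg hr (hdual B hB hBpsd)

lemma inv_re_trace_smul_mem_dmat (R : Submodule ℝ (Matrix ι ι ℂ)) {A : Matrix ι ι ℂ}
    (hA : A ∈ dualCone (R : Set (Matrix ι ι ℂ))) (htr : 0 < A.trace.re) :
    (A.trace.re)⁻¹ • A ∈ dmat (R : Set (Matrix ι ι ℂ)) := by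
  refine ⟨smul_mem_dualCone R hA (inv_nonneg.mpr htr.le), ?_⟩
  calc ((A.trace.re)⁻¹ • A).trace = ((A.trace.re)⁻¹ * A.trace.re : ℝ) := by
        rw [trace_smul, Complex.ofReal_mul, ← Complex.real_smul, IsHermitian.ofReal_re_trace hA.2.1]
    _ = 1 := by rw [inv_mul_cancel₀ htr.ne', Complex.ofReal_one]

variable [DecidableEq ι]

lemma re_trace_nonneg_of_mem_dualCone {R : Set (Matrix ι ι ℂ)} (h1 : 1 ∈ R) {A : Matrix ι ι ℂ}
    (hA : A ∈ dualCone R) : 0 ≤ A.trace.re := by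
  simpa using hA.2.2 1 h1 PosSemidef.one

open scoped MatrixOrder Matrix.Norms.L2Operator in
lemma eq_zero_of_mem_dualCone_of_re_trace_eq_zero (R : Submodule ℝ (Matrix ι ι ℂ))
    (h1 : (1 : Matrix ι ι ℂ) ∈ R) {A : Matrix ι ι ℂ} (hA : A ∈ dualCone (R : Set (Matrix ι ι ℂ)))
    (htr : A.trace.re = 0) : A = 0 := by
  obtain ⟨hAR, hAh, hdual⟩ := hA
  have hBR : ‖A‖ • 1 - A ∈ R := sub_mem (R.smul_mem _ h1) hAR
  have hBpsd : (‖A‖ • 1 - A).PosSemidef := by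
    simpa [Matrix.le_iff, Algebra.algebraMap_eq_smul_one] using
      IsSelfAdjoint.le_algebraMap_norm_self (IsHermitian.isSelfAdjoint hAh)
  have hsq_re : (Aᴴ * A).trace.re ≤ 0 := by
    have := hdual _ hBR hBpsd
    rw [mul_sub, mul_smul_comm, mul_one, trace_sub, trace_smul, Complex.sub_re, Complex.smul_re,
      htr, smul_zero, zero_sub, neg_nonneg] at this
    rwa [hAh]
  have hsq_nonneg : 0 ≤ (Aᴴ * A).trace := (posSemidef_conjTranspose_mul_self A).trace_nonneg
  have hsq : (Aᴴ * A).trace = 0 :=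
    le_antisymm (Complex.le_def.mpr ⟨hsq_re, (Complex.le_def.mp hsq_nonneg).2.symm⟩) hsq_nonneg
  exact trace_conjTranspose_mul_self_eq_zero_iff.mp hsq

end DualCone

section BlockSum

variable {o : Type*} [DecidableEq o] {p : o → Type*}

def blockSum (R : ∀ i, Set (Matrix (p i) (p i) ℂ)) : Set (Matrix (Σ i, p i) (Σ i, p i) ℂ) :=
  {M | ∃ A : ∀ i, Matrix (p i) (p i) ℂ, (∀ i, A i ∈ R i) ∧ M = blockDiagonal' A}

lemma blockDiagonal'_single_mem_blockSum {R : ∀ i, Set (Matrix (p i) (p i) ℂ)}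
    (h0 : ∀ i, 0 ∈ R i) {i : o} {A : Matrix (p i) (p i) ℂ} (hA : A ∈ R i) :
    blockDiagonal' (Pi.single i A) ∈ blockSum R := by
  refine ⟨Pi.single i A, fun j => ?_, rfl⟩
  rcases eq_or_ne j i with rfl | hj
  · simpa using hA
  · simpa [hj] using h0 j

lemma convex_blockSum {R : ∀ i, Set (Matrix (p i) (p i) ℂ)} (hR : ∀ i, Convex ℝ (R i)) :
    Convex ℝ (blockSum R) := by
  rintro _ ⟨A, hA, rfl⟩ _ ⟨B, hB, rfl⟩ a b ha hb hab
  exact ⟨a • A + b • B, fun i => hR i (hA i) (hB i) ha hb hab,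
    by rw [blockDiagonal'_add, blockDiagonal'_smul, blockDiagonal'_smul]⟩

variable [Fintype o] [∀ i, Fintype (p i)]

lemma trace_blockDiagonal'_single {i : o} (A : Matrix (p i) (p i) ℂ) :
    (blockDiagonal' (Pi.single i A)).trace = A.trace := by
  rw [trace_blockDiagonal', Fintype.sum_eq_single i fun j hj => by simp [hj], Pi.single_eq_same]

open scoped MatrixOrder in
lemma posSemidef_blockDiagonal'_iff {𝕜 : Type*} [RCLike 𝕜] {M : ∀ i, Matrix (p i) (p i) 𝕜} :
    (blockDiagonal' M).PosSemidef ↔ ∀ i, (M i).PosSemidef := by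
  classical
  refine ⟨fun h i => ?_, fun h => ?_⟩
  · convert h.submatrix (Sigma.mk i)
    ext
    simp
  · choose B hB using fun i => CStarAlgebra.nonneg_iff_eq_star_mul_self.mp (h i).nonneg
    rw [funext hB]
    simpa [blockDiagonal'_mul, blockDiagonal'_conjTranspose, star_eq_conjTranspose] using
      posSemidef_conjTranspose_mul_self (blockDiagonal' B)

lemma cone_blockSum (R : ∀ i, Set (Matrix (p i) (p i) ℂ)) :
    cone (blockSum R) = blockSum fun i => cone (R i) := by
  ext M
  constructor
  · rintro ⟨⟨A, hA, rfl⟩, hpsd⟩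
    exact ⟨A, fun i => ⟨hA i, posSemidef_blockDiagonal'_iff.mp hpsd i⟩, rfl⟩
  · rintro ⟨A, hA, rfl⟩
    exact ⟨⟨A, fun i => (hA i).1, rfl⟩, posSemidef_blockDiagonal'_iff.mpr fun i => (hA i).2⟩

lemma dualCone_blockSum (R : ∀ i, Set (Matrix (p i) (p i) ℂ)) (h0 : ∀ i, 0 ∈ R i) :
    dualCone (blockSum R) = blockSum fun i => dualCone (R i) := by
  ext M
  constructor
  · rintro ⟨⟨A, hA, rfl⟩, hherm, hdual⟩
    refine ⟨A, fun i => ⟨hA i, isHermitian_blockDiagonal'_iff.mp hherm i, fun B hB hBpsd => ?_⟩,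
      rfl⟩
    have hBpsd' : (blockDiagonal' (Pi.single i B)).PosSemidef :=
      posSemidef_blockDiagonal'_iff.mpr fun j => by
        rcases eq_or_ne j i with rfl | hj
        · simpa using hBpsd
        · simpa [hj] using PosSemidef.zero
    have := hdual _ (blockDiagonal'_single_mem_blockSum h0 hB) hBpsd'
    simpa only [← blockDiagonal'_mul, ← Pi.single_mul_right_apply, trace_blockDiagonal'_single]
      using this
  · rintro ⟨A, hA, rfl⟩
    refine ⟨⟨A, fun i => (hA i).1, rfl⟩, isHermitian_blockDiagonal'_iff.mpr fun i => (hA i).2.1,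
      ?_⟩
    rintro _ ⟨B, hB, rfl⟩ hBpsd
    rw [← blockDiagonal'_mul, trace_blockDiagonal', Complex.re_sum]
    exact Finset.sum_nonneg fun i _ =>
      (hA i).2.2 (B i) (hB i) (posSemidef_blockDiagonal'_iff.mp hBpsd i)

lemma blockDiagonal'_single_mem_dmat_blockSum {R : ∀ i, Set (Matrix (p i) (p i) ℂ)}
    (h0 : ∀ i, 0 ∈ R i) {i : o} {ρ : Matrix (p i) (p i) ℂ} (hρ : ρ ∈ dmat (R i)) :
    blockDiagonal' (Pi.single i ρ) ∈ dmat (blockSum R) := by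
  refine ⟨?_, by rw [trace_blockDiagonal'_single, hρ.2]⟩
  rw [dualCone_blockSum R h0]
  exact blockDiagonal'_single_mem_blockSum (fun j => zero_mem_dualCone (h0 j)) hρ.1

variable [∀ i, DecidableEq (p i)]

lemma dmat_blockSum_subset_convexHull (R : ∀ i, Submodule ℝ (Matrix (p i) (p i) ℂ))
    (h1 : ∀ i, (1 : Matrix (p i) (p i) ℂ) ∈ R i) :
    dmat (blockSum fun i => (R i : Set (Matrix (p i) (p i) ℂ))) ⊆
      convexHull ℝ (⋃ i, (fun ρ => blockDiagonal' (Pi.single i ρ)) ''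
        dmat (R i : Set (Matrix (p i) (p i) ℂ))) := by
  rintro _ ⟨hρ, htr⟩
  rw [dualCone_blockSum _ fun i => (R i).zero_mem] at hρ
  obtain ⟨A, hA, rfl⟩ := hρ
  set t : o → ℝ := fun i => (A i).trace.re
  have ht0 : ∀ i, 0 ≤ t i := fun i => re_trace_nonneg_of_mem_dualCone (h1 i) (hA i)
  have ht1 : ∑ i, t i = 1 := by
    have : ∑ i, ((t i : ℝ) : ℂ) = 1 := by
      simpa only [t, fun i => IsHermitian.ofReal_re_trace (hA i).2.1, trace_blockDiagonal']
        using htr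
    exact_mod_cast this
  have hdecomp : blockDiagonal' A = ∑ i, t i • blockDiagonal' (Pi.single i ((t i)⁻¹ • A i)) := by
    calc blockDiagonal' A = blockDiagonal'AddMonoidHom p p ℂ (∑ i, Pi.single i (A i)) := by
          rw [Finset.univ_sum_single]; rfl
      _ = ∑ i, blockDiagonal' (Pi.single i (A i)) := map_sum _ _ _
      _ = _ := Finset.sum_congr rfl fun i _ => ?_
    rcases eq_or_ne (t i) 0 with hti | hti
    -- here `(t i)⁻¹ = 0`, but the block `A i` vanishes too
    · simp [hti, eq_zero_of_mem_dualCone_of_re_trace_eq_zero (R i) (h1 i) (hA i) hti]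
    · rw [← blockDiagonal'_smul, ← Pi.single_smul, smul_inv_smul₀ hti]
  rw [hdecomp, ← finsum_eq_sum_of_fintype]
  refine (convex_convexHull ℝ _).finsum_mem ht0 (by rwa [finsum_eq_sum_of_fintype])
    fun i hti => subset_convexHull ℝ _ <| Set.mem_iUnion.mpr ⟨i, _,
      inv_re_trace_smul_mem_dmat (R i) (hA i) ((ht0 i).lt_of_ne' hti), rfl⟩

lemma dmat_blockSum (R : ∀ i, Submodule ℝ (Matrix (p i) (p i) ℂ))
    (h1 : ∀ i, (1 : Matrix (p i) (p i) ℂ) ∈ R i) :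
    dmat (blockSum fun i => (R i : Set (Matrix (p i) (p i) ℂ))) =
      convexHull ℝ (⋃ i, (fun ρ => blockDiagonal' (Pi.single i ρ)) ''
        dmat (R i : Set (Matrix (p i) (p i) ℂ))) :=
  (dmat_blockSum_subset_convexHull R h1).antisymm <|
    convexHull_min
      (Set.iUnion_subset fun _ => Set.image_subset_iff.mpr fun _ hρ =>
        blockDiagonal'_single_mem_dmat_blockSum (fun j => (R j).zero_mem) hρ)
      (convex_dmat (convex_blockSum fun i => (R i).convex))

end BlockSum

theorem directSum_cones_and_density_general (m : ℕ) (n : Fin m → ℕ)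
    (R : ∀ i, Submodule ℝ (Matrix (Fin (n i)) (Fin (n i)) ℂ))
    (h1 : ∀ i, (1 : Matrix (Fin (n i)) (Fin (n i)) ℂ) ∈ R i)
    (RSum : Set (Matrix (Σ i, Fin (n i)) (Σ i, Fin (n i)) ℂ))
    (hRSum : RSum = {M | ∃ A : ∀ i, Matrix (Fin (n i)) (Fin (n i)) ℂ,
        (∀ i, A i ∈ R i) ∧ M = Matrix.blockDiagonal' A}) :
    cone RSum = {M | ∃ A : ∀ i, Matrix (Fin (n i)) (Fin (n i)) ℂ,
        (∀ i, A i ∈ cone (R i : Set (Matrix (Fin (n i)) (Fin (n i)) ℂ))) ∧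
        M = Matrix.blockDiagonal' A} ∧
    dualCone RSum = {M | ∃ A : ∀ i, Matrix (Fin (n i)) (Fin (n i)) ℂ,
        (∀ i, A i ∈ dualCone (R i : Set (Matrix (Fin (n i)) (Fin (n i)) ℂ))) ∧
        M = Matrix.blockDiagonal' A} ∧
    dmat RSum = convexHull ℝ (⋃ i,
        (fun ρ => Matrix.blockDiagonal' (Pi.single i ρ)) ''
          dmat (R i : Set (Matrix (Fin (n i)) (Fin (n i)) ℂ))) := by
  subst hRSum
  exact ⟨cone_blockSum _, dualCone_blockSum _ fun i => (R i).zero_mem, dmat_blockSum R h1⟩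

/-- For real matrix systems `R₁, …, R_m`, the positive cones and dual cones of the
block-diagonal direct sum are the direct sums of those of the summands, and the
density matrices of the direct sum form the direct convex sum
`conv(D(R₁) ∪ … ∪ D(R_m))` under the block-diagonal embeddings. -/
theorem directSum_cones_and_density (m : ℕ) (n : Fin m → ℕ)
    (R : ∀ i, Submodule ℝ (Matrix (Fin (n i)) (Fin (n i)) ℂ))
    (h1 : ∀ i, (1 : Matrix (Fin (n i)) (Fin (n i)) ℂ) ∈ R i)
    (hstar : ∀ i, ∀ A ∈ R i, Aᴴ ∈ R i)
    (RSum : Set (Matrix (Σ i, Fin (n i)) (Σ i, Fin (n i)) ℂ))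
    (hRSum : RSum = {M | ∃ A : ∀ i, Matrix (Fin (n i)) (Fin (n i)) ℂ,
        (∀ i, A i ∈ R i) ∧ M = Matrix.blockDiagonal' A}) :
    cone RSum = {M | ∃ A : ∀ i, Matrix (Fin (n i)) (Fin (n i)) ℂ,
        (∀ i, A i ∈ cone (R i : Set (Matrix (Fin (n i)) (Fin (n i)) ℂ))) ∧
        M = Matrix.blockDiagonal' A} ∧
    dualCone RSum = {M | ∃ A : ∀ i, Matrix (Fin (n i)) (Fin (n i)) ℂ,
        (∀ i, A i ∈ dualCone (R i : Set (Matrix (Fin (n i)) (Fin (n i)) ℂ))) ∧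
        M = Matrix.blockDiagonal' A} ∧
    dmat RSum = convexHull ℝ (⋃ i,
        (fun ρ => Matrix.blockDiagonal' (Pi.single i ρ)) ''
          dmat (R i : Set (Matrix (Fin (n i)) (Fin (n i)) ℂ))) :=
  directSum_cones_and_density_general m n R h1 RSum hRSum
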